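/- arXiv:1401.0683 — 3 statements merged into one kernel-verified Lean document; each statement's English description precedes it below -/
import Mathlib

section
/- Let T ∈ ℕ, let N ≥ 2 be a natural number, and let B_0, …, B_T be strictly positive real numbers. Define (α̃_t)_{t=0}^{T} by the backward recursion α̃_T = B_T and, for t = T−1,…,0, α̃_t = B_t · [ (2/(N−1)) ∑_{ℓ=1}^{T−t} ((N−2)/(N−1))^{ℓ−1} α̃_{t+ℓ} + ((N−2)/(N−1))^{T−t} ]. Then α̃_0 = B_0 · ∏_{t=1}^{T} (2·B_t + N − 2)/(N−1). -/
/-! Write `α̃_t = B_t S_t`, where `S_t` is the bracket of the recursion (with `S_T = 1`). Splitting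
off the `ℓ = 1` term of the sum gives `S_t = (2/(N-1)) α̃_{t+1} + r S_{t+1}` with
`r = (N-2)/(N-1)`, i.e. `S_t = ((2 B_{t+1} + N - 2)/(N-1)) S_{t+1}`, which telescopes. -/

open Finset

section BackwardRecursion

variable {R : Type*} [CommSemiring R]

@[to_additive sum_Icc_one_eq_sum_range]
theorem prod_Icc_one_eq_prod_range {M : Type*} [CommMonoid M] (f : ℕ → M) (n : ℕ) :
    ∏ ℓ ∈ Icc 1 n, f ℓ = ∏ i ∈ range n, f (i + 1) := by
  rw [← Ico_add_one_right_eq_Icc, prod_Ico_eq_prod_range, Nat.add_sub_cancel]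
  simp only [add_comm]

/-- `S_t` of the recursion, reindexed by `i = ℓ - 1`. -/
def geomTail (c r : R) (a : ℕ → R) (T t : ℕ) : R :=
  c * ∑ i ∈ range (T - t), r ^ i * a (t + (i + 1)) + r ^ (T - t)

@[simp]
theorem geomTail_self (c r : R) (a : ℕ → R) (T : ℕ) : geomTail c r a T T = 1 := by
  simp [geomTail]

theorem geomTail_of_lt (c r : R) (a : ℕ → R) {T t : ℕ} (h : t < T) :
    geomTail c r a T t = c * a (t + 1) + r * geomTail c r a T (t + 1) := by
  obtain ⟨d, rfl⟩ := Nat.exists_eq_add_of_lt h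
  have hd : t + d + 1 - t = d + 1 := by omega
  have hd' : t + d + 1 - (t + 1) = d := by omega
  have hidx : ∀ i ∈ range d,
      r ^ (i + 1) * a (t + (i + 1 + 1)) = r * (r ^ i * a (t + 1 + (i + 1))) := by
    intro i _
    rw [pow_succ, show t + (i + 1 + 1) = t + 1 + (i + 1) by omega]
    ring
  simp only [geomTail, hd, hd', sum_range_succ', sum_congr rfl hidx, ← mul_sum]
  ring

theorem eq_prod_of_backward_recursion (g S : ℕ → R) (T : ℕ) (hT : S T = 1)
    (h : ∀ t < T, S t = g (t + 1) * S (t + 1)) : S 0 = ∏ t ∈ Icc 1 T, g t := by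
  induction T generalizing g S with
  | zero => simpa using hT
  | succ T ih =>
    have hS1 : S 1 = ∏ t ∈ Icc 1 T, g (t + 1) :=
      ih (fun t => g (t + 1)) (fun t => S (t + 1)) hT fun t ht => h (t + 1) (by omega)
    rw [h 0 T.succ_pos, zero_add, hS1, prod_Icc_one_eq_prod_range, prod_Icc_one_eq_prod_range,
      prod_range_succ' _ T]
    ring

end BackwardRecursion

theorem backward_recursion_closed_form_general (T N : ℕ) (B : ℕ → ℝ)
    (a : ℕ → ℝ) (haT : a T = B T)
    (ha : ∀ t < T, a t =
      B t * ((2 / ((N : ℝ) - 1)) *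
          ∑ ℓ ∈ Finset.Icc 1 (T - t),
            (((N : ℝ) - 2) / ((N : ℝ) - 1)) ^ (ℓ - 1) * a (t + ℓ)
        + (((N : ℝ) - 2) / ((N : ℝ) - 1)) ^ (T - t))) :
    a 0 = B 0 * ∏ t ∈ Finset.Icc 1 T, (2 * B t + (N : ℝ) - 2) / ((N : ℝ) - 1) := by
  set c : ℝ := 2 / ((N : ℝ) - 1)
  set r : ℝ := ((N : ℝ) - 2) / ((N : ℝ) - 1)
  have ha_tail : ∀ t ≤ T, a t = B t * geomTail c r a T t := by
    intro t ht
    rcases ht.lt_or_eq with ht | rfl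
    · simp only [ha t ht, geomTail, sum_Icc_one_eq_sum_range, Nat.add_sub_cancel]
    · simp [haT]
  have hstep : ∀ t < T, geomTail c r a T t = (c * B (t + 1) + r) * geomTail c r a T (t + 1) := by
    intro t ht
    rw [geomTail_of_lt c r a ht, ha_tail (t + 1) ht]
    ring
  rw [ha_tail 0 T.zero_le,
    eq_prod_of_backward_recursion (fun t => c * B t + r) _ T (geomTail_self c r a T) hstep]
  congr 1
  refine prod_congr rfl fun t _ => ?_
  ring

/-- Closed-form solution of the backward recursion for `α̃`: if `α̃_T = B_T` and for
`t < T`, `α̃_t = B_t [ (2/(N-1)) ∑_{ℓ=1}^{T-t} ((N-2)/(N-1))^{ℓ-1} α̃_{t+ℓ}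
+ ((N-2)/(N-1))^{T-t} ]`, then `α̃_0 = B_0 ∏_{t=1}^T (2 B_t + N - 2)/(N-1)`. -/
theorem backward_recursion_closed_form (T N : ℕ) (hN : 2 ≤ N) (B : ℕ → ℝ)
    (hB : ∀ t ≤ T, 0 < B t) (a : ℕ → ℝ) (haT : a T = B T)
    (ha : ∀ t < T, a t =
      B t * ((2 / ((N : ℝ) - 1)) *
          ∑ ℓ ∈ Finset.Icc 1 (T - t),
            (((N : ℝ) - 2) / ((N : ℝ) - 1)) ^ (ℓ - 1) * a (t + ℓ)
        + (((N : ℝ) - 2) / ((N : ℝ) - 1)) ^ (T - t))) :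
    a 0 = B 0 * ∏ t ∈ Finset.Icc 1 T, (2 * B t + (N : ℝ) - 2) / ((N : ℝ) - 1) :=
  backward_recursion_closed_form_general T N B a haT ha
end

section
/- Let (S_n)_{n∈ℕ} be a nonnegative supermartingale with respect to a filtration on a probability space, and let p > 1 be a real number. Then E[ sup_{n∈ℕ} S_n^{1/p} ] ≤ 1 + (1/(p−1)) · E[S_0], where the expectation of the (possibly infinite) supremum is taken in [0,∞]. -/
open MeasureTheory Set
open scoped ENNReal

/-! The maximal inequality for a nonnegative supermartingale, obtained by optional stopping at
the first time `S` exceeds `a`, gives `a · P(∃ n, a ≤ S n) ≤ E[S 0]`. For `U = sup_n S_n^{1/p}`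
this reads `P(U > t) ≤ E[S 0] t^{-p}`. In the layer-cake formula `E U = ∫_0^∞ P(U > t) dt` we
bound the tail by `1` on `(0, 1]` and by `E[S 0] t^{-p}` on `(1, ∞)`, which integrates to
`E[S 0] / (p - 1)`. -/

namespace MeasureTheory

theorem lintegral_eq_lintegral_meas_ofReal_lt {α : Type*} [MeasurableSpace α] {μ : Measure α}
    {f : α → ℝ≥0∞} (hf : AEMeasurable f μ) :
    ∫⁻ a, f a ∂μ = ∫⁻ t in Ioi 0, μ {a | ENNReal.ofReal t < f a} := by
  by_cases htop : μ {a | f a = ∞} = 0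
  · have hfin : ∀ᵐ a ∂μ, f a ≠ ∞ := measure_eq_zero_iff_ae_notMem.1 htop
    calc ∫⁻ a, f a ∂μ = ∫⁻ a, ENNReal.ofReal (f a).toReal ∂μ :=
          lintegral_congr_ae <| by
            filter_upwards [hfin] with a ha using (ENNReal.ofReal_toReal ha).symm
      _ = ∫⁻ t in Ioi 0, μ {a | t < (f a).toReal} :=
          lintegral_eq_lintegral_meas_lt μ (ae_of_all _ fun _ ↦ ENNReal.toReal_nonneg)
            hf.ennreal_toReal
      _ = ∫⁻ t in Ioi 0, μ {a | ENNReal.ofReal t < f a} := by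
          refine setLIntegral_congr_fun measurableSet_Ioi fun t ht ↦ measure_congr ?_
          filter_upwards [hfin] with a ha
          exact propext (ENNReal.ofReal_lt_iff_lt_toReal ht.le ha).symm
  · have hle : ∫⁻ _ in Ioi (0 : ℝ), μ {a | f a = ∞}
        ≤ ∫⁻ t in Ioi 0, μ {a | ENNReal.ofReal t < f a} :=
      lintegral_mono fun t ↦ measure_mono fun a ha ↦ by simp [show f a = ∞ from ha]
    rw [setLIntegral_const, Real.volume_Ioi, ENNReal.mul_top htop] at hle
    rw [lintegral_eq_top_of_measure_eq_top_ne_zero hf htop, top_le_iff.1 hle]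

theorem lintegral_Ioi_one_rpow_neg {p : ℝ} (hp : 1 < p) :
    ∫⁻ t in Ioi (1 : ℝ), ENNReal.ofReal (t ^ (-p)) = ENNReal.ofReal (1 / (p - 1)) := by
  rw [← ofReal_integral_eq_lintegral_ofReal (integrableOn_Ioi_rpow_of_lt (by linarith) one_pos)
    (ae_restrict_of_forall_mem measurableSet_Ioi fun t ht ↦
      Real.rpow_nonneg (zero_lt_one.trans ht).le _),
    integral_Ioi_rpow_of_lt (by linarith) one_pos, Real.one_rpow]
  congr 1
  rw [div_eq_div_iff (by linarith) (by linarith)]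
  ring

variable {Ω : Type*} {m0 : MeasurableSpace Ω} {μ : Measure Ω} [IsFiniteMeasure μ]
  {ℱ : Filtration ℕ m0} {S : ℕ → Ω → ℝ}

theorem Supermartingale.mul_measureReal_exists_le_le_integral_zero (hS : Supermartingale S ℱ μ)
    (hpos : ∀ n, 0 ≤ᵐ[μ] S n) (a : ℝ) (n : ℕ) :
    a * μ.real {ω | ∃ k ≤ n, a ≤ S k ω} ≤ ∫ ω, S 0 ω ∂μ := by
  set τ : Ω → ℕ∞ := fun ω ↦ (hittingBtwn S (Ici a) 0 n ω : ℕ)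
  have hτ : IsStoppingTime ℱ τ :=
    hS.stronglyAdapted.adapted.isStoppingTime_hittingBtwn measurableSet_Ici
  have hτ_le : ∀ ω, τ ω ≤ n := fun ω ↦ WithTop.coe_le_coe.2 (hittingBtwn_le ω)
  have hint : Integrable (stoppedValue S τ) μ := integrable_stoppedValue ℕ hτ hS.integrable hτ_le
  have hnonneg : 0 ≤ᵐ[μ] stoppedValue S τ := by
    filter_upwards [ae_all_iff.2 hpos] with ω hω using hω _
  have hmeas : MeasurableSet {ω | ∃ k ≤ n, a ≤ S k ω} := by
    simp_rw [ofPred_exists, ofPred_and]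
    exact .iUnion fun k ↦ (MeasurableSet.const _).inter <|
      measurableSet_le measurable_const ((hS.stronglyMeasurable k).measurable.le (ℱ.le k))
  have hhit : ∀ ω ∈ {ω | ∃ k ≤ n, a ≤ S k ω}, a ≤ stoppedValue S τ ω := by
    rintro ω ⟨k, hk, hak⟩
    exact stoppedValue_hittingBtwn_mem (s := Ici a) ⟨k, ⟨Nat.zero_le _, hk⟩, hak⟩
  have hstop : ∫ ω, stoppedValue S τ ω ∂μ ≤ ∫ ω, S 0 ω ∂μ := by
    have h := hS.neg.expected_stoppedValue_mono (isStoppingTime_const ℱ 0) hτ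
      (fun ω ↦ bot_le) hτ_le
    rw [stoppedValue_const] at h
    simpa [stoppedValue, integral_neg] using h
  calc a * μ.real {ω | ∃ k ≤ n, a ≤ S k ω}
      ≤ ∫ ω in {ω | ∃ k ≤ n, a ≤ S k ω}, stoppedValue S τ ω ∂μ :=
        setIntegral_ge_of_const_le_real hmeas (measure_ne_top _ _) hhit hint.integrableOn
    _ ≤ ∫ ω, stoppedValue S τ ω ∂μ := setIntegral_le_integral hint hnonneg
    _ ≤ ∫ ω, S 0 ω ∂μ := hstop

theorem Supermartingale.maximal_ineq (hS : Supermartingale S ℱ μ)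
    (hpos : ∀ n, 0 ≤ᵐ[μ] S n) (a : ℝ) :
    ENNReal.ofReal a * μ {ω | ∃ n, a ≤ S n ω} ≤ ENNReal.ofReal (∫ ω, S 0 ω ∂μ) := by
  have hunion : {ω | ∃ n, a ≤ S n ω} = ⋃ n, {ω | ∃ k ≤ n, a ≤ S k ω} := by
    ext ω
    simp only [mem_ofPred_eq, mem_iUnion]
    exact ⟨fun ⟨n, h⟩ ↦ ⟨n, n, le_rfl, h⟩, fun ⟨_, k, _, h⟩ ↦ ⟨k, h⟩⟩
  have hmono : Monotone fun n ↦ {ω | ∃ k ≤ n, a ≤ S k ω} :=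
    fun _ _ hmn _ ⟨k, hk, h⟩ ↦ ⟨k, hk.trans hmn, h⟩
  rw [hunion, hmono.measure_iUnion, ENNReal.mul_iSup]
  refine iSup_le fun n ↦ ?_
  rw [← ofReal_measureReal, ← ENNReal.ofReal_mul' measureReal_nonneg]
  exact ENNReal.ofReal_le_ofReal (hS.mul_measureReal_exists_le_le_integral_zero hpos a n)

theorem Supermartingale.measure_ofReal_lt_iSup_rpow_inv_le (hS : Supermartingale S ℱ μ)
    (hpos : ∀ n, 0 ≤ᵐ[μ] S n) {p t : ℝ} (hp : 0 < p) (ht : 0 < t) :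
    μ {ω | ENNReal.ofReal t < ⨆ n, ENNReal.ofReal (S n ω ^ p⁻¹)}
      ≤ ENNReal.ofReal (∫ ω, S 0 ω ∂μ) * ENNReal.ofReal (t ^ (-p)) := by
  have htp : 0 < t ^ p := Real.rpow_pos_of_pos ht p
  have hsub : {ω | ENNReal.ofReal t < ⨆ n, ENNReal.ofReal (S n ω ^ p⁻¹)}
      ≤ᵐ[μ] {ω | ∃ n, t ^ p ≤ S n ω} := by
    filter_upwards [ae_all_iff.2 hpos] with ω hω hlt
    obtain ⟨n, hn⟩ := lt_iSup_iff.1 hlt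
    have hn : t < S n ω ^ p⁻¹ := (ENNReal.ofReal_lt_ofReal_iff'.1 hn).1
    exact ⟨n, ((Real.lt_rpow_inv_iff_of_pos ht.le (hω n) hp).1 hn).le⟩
  rw [Real.rpow_neg ht.le, ENNReal.ofReal_inv_of_pos htp, ← div_eq_mul_inv,
    ENNReal.le_div_iff_mul_le (.inl (ENNReal.ofReal_pos.2 htp).ne') (.inl ENNReal.ofReal_ne_top),
    mul_comm]
  exact (mul_le_mul_right (measure_mono_ae hsub) _).trans (hS.maximal_ineq hpos (t ^ p))

end MeasureTheory

/-- For a nonnegative supermartingale `(S_n)` and `p > 1`,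
`E[sup_n S_n^{1/p}] ≤ 1 + (1/(p-1)) E[S_0]`, the expectation of the (possibly infinite)
supremum being taken in `[0,∞]`. -/
theorem supermartingale_sup_rpow_bound {Ω : Type*} {m0 : MeasurableSpace Ω}
    {μ : Measure Ω} [IsProbabilityMeasure μ] (ℱ : Filtration ℕ m0)
    (S : ℕ → Ω → ℝ) (hS : Supermartingale S ℱ μ) (hpos : ∀ n, 0 ≤ᵐ[μ] S n)
    (p : ℝ) (hp : 1 < p) :
    ∫⁻ ω, ⨆ n, ENNReal.ofReal (S n ω ^ (1 / p)) ∂μ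
      ≤ 1 + ENNReal.ofReal ((1 / (p - 1)) * ∫ ω, S 0 ω ∂μ) := by
  have hmeas : Measurable fun ω ↦ ⨆ n, ENNReal.ofReal (S n ω ^ (1 / p)) :=
    .iSup fun n ↦ ENNReal.measurable_ofReal.comp
      (((hS.stronglyMeasurable n).measurable.le (ℱ.le n)).pow_const _)
  rw [lintegral_eq_lintegral_meas_ofReal_lt hmeas.aemeasurable,
    ← Ioc_union_Ioi_eq_Ioi zero_le_one,
    lintegral_union measurableSet_Ioi (Ioc_disjoint_Ioi le_rfl),
    ENNReal.ofReal_mul (one_div_pos.2 (sub_pos.2 hp)).le, mul_comm,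
    ← lintegral_Ioi_one_rpow_neg hp, ← lintegral_const_mul' _ _ ENNReal.ofReal_ne_top]
  refine add_le_add ?_ ?_
  · calc ∫⁻ t in Ioc (0 : ℝ) 1, μ {ω | ENNReal.ofReal t < ⨆ n, ENNReal.ofReal (S n ω ^ (1 / p))}
        ≤ ∫⁻ _ in Ioc (0 : ℝ) 1, 1 := lintegral_mono fun _ ↦ prob_le_one
      _ = 1 := by simp
  · refine setLIntegral_mono ?_ fun t ht ↦ ?_
    · fun_prop
    simpa only [one_div] using
      hS.measure_ofReal_lt_iSup_rpow_inv_le hpos (zero_lt_one.trans hp) (zero_lt_one.trans ht)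
end

section
/- Let α ∈ (0,1) and γ ∈ (0,1) satisfy γ·α/(1−α) < 1, and let β > 0. Let U be a standard Gaussian random variable. Then there exist constants D < ∞ and δ > 0 such that for all x ∈ ℝ, E[ ( (β²·e^{x}·U² ∨ 1) / (β^{γ}·e^{γx/2}·|U|^{γ}) )^{α/(1−α)} ] ≤ D·exp(δ·|x|). -/
/-!
Put `p = α/(1-α)` and `y = β e^{x/2} |U|`. The integrand is `(max(y², 1)/y^γ)^p`, the larger of
`y^{(2-γ)p}` and `y^{-γp}`, hence at most their sum. Both `|U|^{(2-γ)p}` and `|U|^{-γp}` are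
Gaussian-integrable because the exponents exceed `-1` (this is where `γp < 1` enters), and both
powers of `β e^{x/2}` are at most a constant times `e^{p|x|}`.
-/

open MeasureTheory ProbabilityTheory Real

lemma integrable_abs_rpow_mul_exp_neg_mul_sq {b s : ℝ} (hb : 0 < b) (hs : -1 < s) :
    Integrable fun x : ℝ => |x| ^ s * exp (-b * x ^ 2) := by
  have hIoi : IntegrableOn (fun x : ℝ => |x| ^ s * exp (-b * x ^ 2)) (Set.Ioi 0) :=
    (integrableOn_rpow_mul_exp_neg_mul_sq hb hs).congr_fun
      (fun x hx => by rw [abs_of_pos hx]) measurableSet_Ioi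
  rw [← integrableOn_univ, ← Set.Iio_union_Ici (a := (0 : ℝ)), integrableOn_union,
    integrableOn_Ici_iff_integrableOn_Ioi]
  refine ⟨?_, hIoi⟩
  rw [← (Measure.measurePreserving_neg (volume : Measure ℝ)).integrableOn_comp_preimage
      (Homeomorph.neg ℝ).measurableEmbedding]
  simpa only [Function.comp_def, abs_neg, neg_sq, Set.neg_preimage, Set.neg_Iio, neg_zero]
    using hIoi

lemma integrable_abs_rpow_gaussianReal {s : ℝ} (hs : -1 < s) (v : NNReal) :
    Integrable (fun u : ℝ => |u| ^ s) (gaussianReal 0 v) := by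
  rcases eq_or_ne v 0 with rfl | hv
  · rw [gaussianReal_zero_var]
    exact integrable_dirac (by simp)
  rw [gaussianReal_of_var_ne_zero _ hv, integrable_withDensity_iff (measurable_gaussianPDF _ _)
    (Filter.Eventually.of_forall fun _ => ENNReal.ofReal_lt_top)]
  have hb : 0 < (2 * (v : ℝ))⁻¹ := by positivity
  refine ((integrable_abs_rpow_mul_exp_neg_mul_sq hb hs).const_mul (√(2 * π * v))⁻¹).congr
    (Filter.Eventually.of_forall fun x => ?_)
  simp only [toReal_gaussianPDF, gaussianPDFReal, sub_zero]
  ring_nf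

lemma exp_mul_le_exp_mul_abs {c δ : ℝ} (h : |c| ≤ δ) (x : ℝ) : exp (c * x) ≤ exp (δ * |x|) :=
  exp_le_exp.mpr <| (le_abs_self _).trans <| by
    rw [abs_mul]; exact mul_le_mul_of_nonneg_right h (abs_nonneg x)

lemma max_sq_one_div_rpow_rpow_le {y γ p : ℝ} (hy : 0 ≤ y) (hγ : 0 < γ) (hp : 0 < p) :
    (max (y ^ 2) 1 / y ^ γ) ^ p ≤ y ^ ((2 - γ) * p) + y ^ (-(γ * p)) := by
  have hrhs : 0 ≤ y ^ ((2 - γ) * p) + y ^ (-(γ * p)) := by positivity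
  rcases hy.eq_or_lt with rfl | hy
  · simpa [zero_rpow hγ.ne', zero_rpow hp.ne'] using hrhs
  have hsplit : max (y ^ 2) 1 / y ^ γ = max (y ^ (2 - γ)) (y ^ (-γ)) := by
    rw [rpow_sub hy, rpow_neg hy.le, ← one_div, rpow_two, max_div_div_right (by positivity)]
  rw [hsplit, rpow_max (by positivity) (by positivity) hp.le, ← rpow_mul hy.le,
    ← rpow_mul hy.le, neg_mul]
  exact max_le_add_of_nonneg (by positivity) (by positivity)

lemma mul_exp_half_rpow_le {β c δ : ℝ} (hβ : 0 < β) (h : |c| ≤ 2 * δ) (x : ℝ) :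
    (β * exp (x / 2)) ^ c ≤ β ^ c * exp (δ * |x|) := calc
  (β * exp (x / 2)) ^ c = β ^ c * exp (c / 2 * x) := by
    rw [mul_rpow hβ.le (exp_pos _).le, ← exp_mul]; ring_nf
  _ ≤ β ^ c * exp (δ * |x|) := by
    have hc : |c / 2| ≤ δ := by rw [abs_div, abs_two]; linarith
    exact mul_le_mul_of_nonneg_left (exp_mul_le_exp_mul_abs hc x) (by positivity)

lemma max_sq_one_div_rpow_eq_of_scale {β : ℝ} (hβ : 0 < β) (γ x u : ℝ) :
    max (β ^ 2 * exp x * u ^ 2) 1 / (β ^ γ * exp (γ * x / 2) * |u| ^ γ)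
      = max ((β * exp (x / 2) * |u|) ^ 2) 1 / (β * exp (x / 2) * |u|) ^ γ := by
  have hsq : (β * exp (x / 2) * |u|) ^ 2 = β ^ 2 * exp x * u ^ 2 := by
    rw [mul_pow, mul_pow, sq_abs, ← exp_nat_mul]; ring_nf
  rw [hsq, mul_rpow (by positivity) (abs_nonneg u), mul_rpow hβ.le (exp_pos _).le, ← exp_mul]
  ring_nf

/-- In the stochastic volatility model, with `α, γ ∈ (0,1)`, `γα/(1-α) < 1`, `β > 0` and
`U` standard Gaussian, there exist `D < ∞` and `δ > 0` such that for all `x`,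
`E[((β² e^x U² ∨ 1)/(β^γ e^{γx/2} |U|^γ))^{α/(1-α)}] ≤ D exp(δ|x|)`. -/
theorem sv_test_function_moment_bound (α γ β : ℝ)
    (hα : α ∈ Set.Ioo (0 : ℝ) 1) (hγ : γ ∈ Set.Ioo (0 : ℝ) 1)
    (hγα : γ * α / (1 - α) < 1) (hβ : 0 < β) :
    ∃ (D δ : ℝ), 0 < δ ∧ ∀ x : ℝ,
      ∫ u, ((max (β ^ 2 * Real.exp x * u ^ 2) 1) /
              (β ^ γ * Real.exp (γ * x / 2) * |u| ^ γ)) ^ (α / (1 - α))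
          ∂(gaussianReal 0 1)
        ≤ D * Real.exp (δ * |x|) := by
  obtain ⟨hα0, hα1⟩ := hα
  obtain ⟨hγ0, hγ1⟩ := hγ
  set p := α / (1 - α)
  have hp : 0 < p := div_pos hα0 (by linarith)
  have hγp : γ * p < 1 := by rwa [mul_div_assoc] at hγα
  set a := (2 - γ) * p
  set b := -(γ * p)
  have ha : |a| ≤ 2 * p := by rw [abs_of_pos (by nlinarith)]; nlinarith
  have hb : |b| ≤ 2 * p := by rw [abs_of_neg (by nlinarith)]; nlinarith
  have hint_a := (integrable_abs_rpow_gaussianReal (by nlinarith : -1 < a) 1).const_mul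
  have hint_b := (integrable_abs_rpow_gaussianReal (by linarith : -1 < b) 1).const_mul
  set M : ℝ → ℝ := fun s => ∫ u, |u| ^ s ∂(gaussianReal 0 1)
  refine ⟨β ^ a * M a + β ^ b * M b, p, hp, fun x => ?_⟩
  set t := β * exp (x / 2)
  calc _ ≤ ∫ u, t ^ a * |u| ^ a + t ^ b * |u| ^ b ∂(gaussianReal 0 1) := by
        refine integral_mono_of_nonneg (.of_forall fun u => by positivity)
          ((hint_a _).add (hint_b _)) (.of_forall fun u => ?_)
        dsimp only
        rw [max_sq_one_div_rpow_eq_of_scale hβ, ← mul_rpow (by positivity) (abs_nonneg u),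
          ← mul_rpow (by positivity) (abs_nonneg u)]
        exact max_sq_one_div_rpow_rpow_le (by positivity) hγ0 hp
    _ = t ^ a * M a + t ^ b * M b := by
        rw [integral_add (hint_a _) (hint_b _), integral_const_mul, integral_const_mul]
    _ ≤ β ^ a * exp (p * |x|) * M a + β ^ b * exp (p * |x|) * M b := by
        gcongr ?_ * _ + ?_ * _
        exacts [mul_exp_half_rpow_le hβ ha x, mul_exp_half_rpow_le hβ hb x]
    _ = (β ^ a * M a + β ^ b * M b) * exp (p * |x|) := by ring
end
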